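/- Let G be a locally compact second countable Hausdorff topological group with left Haar measure μ_G, H ⊆ G a compact subgroup, q : G → G/H the quotient map, H_R and 𝒦 separable complex Hilbert spaces, and Λ the left regular representation (Λ(g)Φ)(g') = Φ(g⁻¹g') on the Bochner space L²(G, μ_G; 𝒦). Suppose W : H_R → L²(G, μ_G; 𝒦) is an isometry whose range projection commutes with the representation: Λ(g) W W* = W W* Λ(g) for all g ∈ G. Then U(g) := W* Λ(g) W defines a strongly continuous unitary representation of G on H_R, and E(X) := W* M_{χ_{q⁻¹(X)}} W defines a POVM on the Borel σ-algebra of G/H which is covariant with respect to U, i.e. E(g·X) = U(g) E(X) U(g)* for all g ∈ G and Borel X ⊆ G/H. -/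

import Mathlib

open MeasureTheory
open scoped ENNReal NNReal Pointwise

local notation "⟪" x ", " y "⟫_ℂ" => @inner ℂ _ _ x y

/-!
Since `W† W = 1`, compression `A ↦ W† A W` is multiplicative on products `A B` in which one
factor commutes with the range projection `W W†`. So `U` inherits the group law of `Λ`, and
`U(g)† = U(g⁻¹)` makes it unitary. The multiplication operators have matrix elements
`⟪Φ, M_S Ψ⟫ = ∫_S ⟪Φ, Ψ⟫`, which gives positivity and σ-additivity of `E`, and
`M_{g S} = Λ(g) M_S Λ(g⁻¹)` together with multiplicativity gives covariance. Strong continuity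
is continuity of translation in `L²`.
-/

namespace ContinuousLinearMap

variable {𝕜 H E : Type*} [RCLike 𝕜]
  [NormedAddCommGroup H] [InnerProductSpace 𝕜 H] [CompleteSpace H]
  [NormedAddCommGroup E] [InnerProductSpace 𝕜 E] [CompleteSpace E]

noncomputable def compress (W : H →L[𝕜] E) (A : E →L[𝕜] E) : H →L[𝕜] H := adjoint W ∘L (A ∘L W)

variable {W : H →L[𝕜] E}

theorem inner_compress_apply (A : E →L[𝕜] E) (ψ ψ' : H) :
    inner 𝕜 ψ (W.compress A ψ') = inner 𝕜 (W ψ) (A (W ψ')) :=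
  adjoint_inner_right W ψ (A (W ψ'))

theorem adjoint_compress (A : E →L[𝕜] E) : adjoint (W.compress A) = W.compress (adjoint A) := by
  simp only [compress, adjoint_comp, adjoint_adjoint, comp_assoc]

theorem IsPositive.compress {A : E →L[𝕜] E} (hA : A.IsPositive) (W : H →L[𝕜] E) :
    (W.compress A).IsPositive :=
  hA.adjoint_conj W

theorem compress_one (hW : adjoint W ∘L W = 1) : W.compress 1 = 1 := by
  rw [compress, one_def, id_comp, hW]

theorem compress_comp_of_comp_commute_right (hW : adjoint W ∘L W = 1) (A : E →L[𝕜] E)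
    {B : E →L[𝕜] E} (hB : B ∘L (W ∘L adjoint W) = (W ∘L adjoint W) ∘L B) :
    W.compress (A ∘L B) = W.compress A * W.compress B := by
  have hBW : B ∘L W = W ∘L (W.compress B) := by
    calc B ∘L W = B ∘L (W ∘L adjoint W) ∘L W := by rw [comp_assoc, hW, one_def, comp_id]
      _ = W ∘L (W.compress B) := by rw [← comp_assoc, hB]; rfl
  rw [compress, comp_assoc, hBW]
  rfl

theorem compress_comp_of_comp_commute_left (hW : adjoint W ∘L W = 1) {A : E →L[𝕜] E}
    (hA : A ∘L (W ∘L adjoint W) = (W ∘L adjoint W) ∘L A) (B : E →L[𝕜] E) :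
    W.compress (A ∘L B) = W.compress A * W.compress B := by
  have hWA : adjoint W ∘L A = (W.compress A) ∘L adjoint W := by
    calc adjoint W ∘L A = adjoint W ∘L ((W ∘L adjoint W) ∘L A) := by
          rw [← comp_assoc, ← comp_assoc, hW, one_def, id_comp]
      _ = (W.compress A) ∘L adjoint W := by rw [← hA]; rfl
  rw [compress, ← comp_assoc, ← comp_assoc, hWA]
  rfl

end ContinuousLinearMap

theorem mem_unitary_of_map_mul {G M : Type*} [Group G] [Monoid M] [StarMul M] {U : G → M}
    (h1 : U 1 = 1) (hmul : ∀ g g', U (g * g') = U g * U g') (hstar : ∀ g, star (U g) = U g⁻¹)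
    (g : G) : U g ∈ unitary M := by
  rw [Unitary.mem_iff, hstar, ← hmul, ← hmul, inv_mul_cancel, mul_inv_cancel, h1]
  exact ⟨rfl, rfl⟩

theorem QuotientGroup.preimage_mk_smul_set {G : Type*} [Group G] (N : Subgroup G) (g : G)
    (X : Set (G ⧸ N)) :
    (QuotientGroup.mk : G → G ⧸ N) ⁻¹' (g • X) = g • (QuotientGroup.mk ⁻¹' X) := by
  ext x
  simp [Set.mem_smul_set_iff_inv_smul_mem]

section Multiplication

variable {α 𝕜 E : Type*} [MeasurableSpace α] {μ : Measure α} [RCLike 𝕜]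
  [NormedAddCommGroup E] [InnerProductSpace 𝕜 E]

def IsIndicatorMul (μ : Measure α) (S : Set α) (M : Lp E 2 μ →L[𝕜] Lp E 2 μ) : Prop :=
  ∀ Φ : Lp E 2 μ, (M Φ : α → E) =ᵐ[μ] S.indicator Φ

namespace IsIndicatorMul

variable {S : Set α} {M : Lp E 2 μ →L[𝕜] Lp E 2 μ}

theorem eq_one (hM : IsIndicatorMul μ Set.univ M) : M = 1 := by
  ext Φ
  simpa using hM Φ

theorem inner_apply_right (hM : IsIndicatorMul μ S M) (hS : MeasurableSet S) (Φ Ψ : Lp E 2 μ) :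
    inner 𝕜 Φ (M Ψ) = ∫ x in S, inner 𝕜 (Φ x) (Ψ x) ∂μ := by
  rw [L2.inner_def, ← integral_indicator hS]
  refine integral_congr_ae ?_
  filter_upwards [hM Ψ] with x hx
  by_cases hxS : x ∈ S <;> simp [hx, hxS]

theorem isSymmetric (hM : IsIndicatorMul μ S M) (hS : MeasurableSet S) :
    (M : Lp E 2 μ →ₗ[𝕜] Lp E 2 μ).IsSymmetric := fun Φ Ψ => by
  change inner 𝕜 (M Φ) Ψ = inner 𝕜 Φ (M Ψ)
  rw [← inner_conj_symm, hM.inner_apply_right hS, hM.inner_apply_right hS, ← integral_conj]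
  simp only [inner_conj_symm]

theorem isPositive (hM : IsIndicatorMul μ S M) (hS : MeasurableSet S) : M.IsPositive := by
  refine ⟨hM.isSymmetric hS, fun Φ => ?_⟩
  rw [ContinuousLinearMap.reApplyInnerSelf_apply, ← inner_conj_symm, hM.inner_apply_right hS,
    RCLike.conj_re, ← integral_re (L2.integrable_inner Φ Φ).restrict]
  exact integral_nonneg fun x => inner_self_nonneg

theorem hasSum_inner {ι : Type*} [Countable ι] {S : ι → Set α} {M : ι → Lp E 2 μ →L[𝕜] Lp E 2 μ}
    {M' : Lp E 2 μ →L[𝕜] Lp E 2 μ} (hS : ∀ i, MeasurableSet (S i))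
    (hdisj : Pairwise (Function.onFun Disjoint S)) (hM : ∀ i, IsIndicatorMul μ (S i) (M i))
    (hM' : IsIndicatorMul μ (⋃ i, S i) M') (Φ Ψ : Lp E 2 μ) :
    HasSum (fun i => inner 𝕜 Φ (M i Ψ)) (inner 𝕜 Φ (M' Ψ)) := by
  simp only [fun i => (hM i).inner_apply_right (hS i), hM'.inner_apply_right (.iUnion hS)]
  exact hasSum_integral_iUnion hS hdisj (L2.integrable_inner Φ Ψ).integrableOn

end IsIndicatorMul

end Multiplication

section LeftRegular

variable {G 𝕜 E : Type*} [Group G] [MeasurableSpace G] {μ : Measure G} [RCLike 𝕜]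
  [NormedAddCommGroup E] [InnerProductSpace 𝕜 E]

def IsLeftRegularRep (μ : Measure G) (Λ : G → Lp E 2 μ →L[𝕜] Lp E 2 μ) : Prop :=
  ∀ (g : G) (Φ : Lp E 2 μ), (Λ g Φ : G → E) =ᵐ[μ] fun x => Φ (g⁻¹ * x)

namespace IsLeftRegularRep

variable {Λ : G → Lp E 2 μ →L[𝕜] Lp E 2 μ}

theorem map_one (hΛ : IsLeftRegularRep μ Λ) : Λ 1 = 1 := by
  ext Φ
  simpa using hΛ 1 Φ

variable [MeasurableMul G] [μ.IsMulLeftInvariant]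

theorem map_mul (hΛ : IsLeftRegularRep μ Λ) (g g' : G) : Λ (g * g') = Λ g ∘L Λ g' := by
  ext Φ
  have hcomp := (measurePreserving_mul_left μ g⁻¹).quasiMeasurePreserving.ae_eq (hΛ g' Φ)
  simp only [Function.comp_def, ← mul_assoc, ← mul_inv_rev] at hcomp
  exact (hΛ (g * g') Φ).trans ((hΛ g (Λ g' Φ)).trans hcomp).symm

theorem inner_map_apply_left (hΛ : IsLeftRegularRep μ Λ) (g : G) (Φ Ψ : Lp E 2 μ) :
    inner 𝕜 (Λ g Φ) Ψ = inner 𝕜 Φ (Λ g⁻¹ Ψ) := by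
  rw [L2.inner_def, L2.inner_def, ← integral_mul_left_eq_self _ g]
  refine integral_congr_ae ?_
  have hΦ := (measurePreserving_mul_left μ g).quasiMeasurePreserving.ae_eq (hΛ g Φ)
  filter_upwards [hΦ, hΛ g⁻¹ Ψ] with x hx hy
  simp_all

theorem adjoint_eq [CompleteSpace E] (hΛ : IsLeftRegularRep μ Λ) (g : G) :
    ContinuousLinearMap.adjoint (Λ g) = Λ g⁻¹ :=
  ((ContinuousLinearMap.eq_adjoint_iff _ _).mpr (by simpa using hΛ.inner_map_apply_left g⁻¹)).symm

theorem eq_comp_comp_of_isIndicatorMul_smul (hΛ : IsLeftRegularRep μ Λ) {S : Set G}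
    {M M' : Lp E 2 μ →L[𝕜] Lp E 2 μ} (hM : IsIndicatorMul μ S M) (g : G)
    (hM' : IsIndicatorMul μ (g • S) M') : M' = Λ g ∘L (M ∘L Λ g⁻¹) := by
  ext Φ
  have hMΨ : (M (Λ g⁻¹ Φ) : G → E) =ᵐ[μ] S.indicator fun y => Φ (g * y) := by
    filter_upwards [hM (Λ g⁻¹ Φ), hΛ g⁻¹ Φ] with y hMy hΛy
    simp only [hMy, Set.indicator, hΛy, inv_inv]
  have htrans := (measurePreserving_mul_left μ g⁻¹).quasiMeasurePreserving.ae_eq hMΨ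
  have hind : ∀ x, S.indicator (fun y => Φ (g * y)) (g⁻¹ * x) = (g • S).indicator Φ x := by
    intro x
    classical
    rw [Set.indicator_apply, Set.indicator_apply, Set.mem_smul_set_iff_inv_smul_mem, smul_eq_mul,
      mul_inv_cancel_left]
  simp only [Function.comp_def, hind] at htrans
  exact (hM' Φ).trans ((hΛ g _).trans htrans).symm

theorem continuous_apply [TopologicalSpace G] [IsTopologicalGroup G] [BorelSpace G]
    [μ.InnerRegularCompactLTTop] [IsLocallyFiniteMeasure μ] (hΛ : IsLeftRegularRep μ Λ)
    (Φ : Lp E 2 μ) : Continuous fun g => Λ g Φ := by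
  let translate : C(G × G, G) := ⟨fun p => p.1⁻¹ * p.2, by fun_prop⟩
  have hmp (g : G) : MeasurePreserving (translate.curry g) μ μ := measurePreserving_mul_left μ g⁻¹
  have hΛ_eq : (fun g => Λ g Φ) = fun g => Lp.compMeasurePreserving (translate.curry g) (hmp g) Φ :=
    funext fun g => Lp.ext ((hΛ g Φ).trans (Lp.coeFn_compMeasurePreserving Φ (hmp g)).symm)
  rw [hΛ_eq]
  exact continuous_const.compMeasurePreservingLp translate.curry.continuous hmp ENNReal.ofNat_ne_top

end IsLeftRegularRep

end LeftRegular

theorem stmt5 {G : Type*} [Group G] [TopologicalSpace G] [IsTopologicalGroup G]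
    [LocallyCompactSpace G] [SecondCountableTopology G]
    [MeasurableSpace G] [BorelSpace G]
    (μ : Measure G) [μ.IsHaarMeasure]
    (Hsub : Subgroup G)
    [MeasurableSpace (G ⧸ Hsub)] [BorelSpace (G ⧸ Hsub)]
    {HR K : Type*}
    [NormedAddCommGroup HR] [InnerProductSpace ℂ HR] [CompleteSpace HR]
    [NormedAddCommGroup K] [InnerProductSpace ℂ K] [CompleteSpace K]
    (Λ : G → (Lp K 2 μ →L[ℂ] Lp K 2 μ))
    (hΛ : ∀ (g : G) (Φ : Lp K 2 μ),
        (Λ g Φ : G → K) =ᵐ[μ] fun g' => Φ (g⁻¹ * g'))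
    (Mop : Set (G ⧸ Hsub) → (Lp K 2 μ →L[ℂ] Lp K 2 μ))
    (hMop : ∀ X : Set (G ⧸ Hsub), MeasurableSet X → ∀ Φ : Lp K 2 μ,
        (Mop X Φ : G → K)
          =ᵐ[μ] Set.indicator ((QuotientGroup.mk : G → G ⧸ Hsub) ⁻¹' X) (Φ : G → K))
    (W : HR →L[ℂ] Lp K 2 μ)
    (hWiso : ∀ ψ : HR, ‖W ψ‖ = ‖ψ‖)
    (hWcomm : ∀ g : G,
        Λ g ∘L (W ∘L ContinuousLinearMap.adjoint W)
          = (W ∘L ContinuousLinearMap.adjoint W) ∘L Λ g)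
    (U : G → (HR →L[ℂ] HR))
    (hUdef : ∀ g : G, U g = ContinuousLinearMap.adjoint W ∘L (Λ g ∘L W))
    (E : Set (G ⧸ Hsub) → (HR →L[ℂ] HR))
    (hEdef : ∀ X : Set (G ⧸ Hsub), MeasurableSet X →
        E X = ContinuousLinearMap.adjoint W ∘L (Mop X ∘L W)) :
    (U 1 = 1) ∧
    (∀ g g' : G, U (g * g') = U g * U g') ∧
    (∀ g : G, U g ∈ unitary (HR →L[ℂ] HR)) ∧
    (∀ ψ : HR, Continuous fun g : G => U g ψ) ∧
    (∀ X : Set (G ⧸ Hsub), MeasurableSet X → (E X).IsPositive) ∧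
    (E Set.univ = 1) ∧
    (∀ X : ℕ → Set (G ⧸ Hsub), (∀ i, MeasurableSet (X i)) →
        Pairwise (Function.onFun Disjoint X) →
        ∀ ψ ψ' : HR, HasSum (fun i => ⟪ψ, E (X i) ψ'⟫_ℂ) ⟪ψ, E (⋃ i, X i) ψ'⟫_ℂ) ∧
    (∀ (g : G) (X : Set (G ⧸ Hsub)), MeasurableSet X →
        E (g • X) = U g * E X * star (U g)) := by
  open ContinuousLinearMap in
  have hΛ : IsLeftRegularRep μ Λ := hΛ
  have hM (X : Set (G ⧸ Hsub)) (hX : MeasurableSet X) :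
      IsIndicatorMul μ (QuotientGroup.mk ⁻¹' X) (Mop X) := hMop X hX
  have hW : adjoint W ∘L W = 1 := W.norm_map_iff_adjoint_comp_self.mp hWiso
  have hU (g : G) : U g = W.compress (Λ g) := hUdef g
  have hE (X : Set (G ⧸ Hsub)) (hX : MeasurableSet X) : E X = W.compress (Mop X) := hEdef X hX
  have hq : Measurable (QuotientGroup.mk : G → G ⧸ Hsub) := continuous_quotient_mk'.measurable
  have hU_one : U 1 = 1 := by rw [hU, hΛ.map_one, compress_one hW]
  have hU_mul (g g' : G) : U (g * g') = U g * U g' := by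
    rw [hU, hU, hU, hΛ.map_mul, compress_comp_of_comp_commute_right hW _ (hWcomm g')]
  have hU_star (g : G) : star (U g) = U g⁻¹ := by
    rw [hU, hU, star_eq_adjoint, adjoint_compress, hΛ.adjoint_eq]
  refine ⟨hU_one, hU_mul, mem_unitary_of_map_mul hU_one hU_mul hU_star, fun ψ => ?_,
    fun X hX => ?_, ?_, fun X hX hdisj ψ ψ' => ?_, fun g X hX => ?_⟩
  · simp only [hU]
    exact (adjoint W).continuous.comp (hΛ.continuous_apply (W ψ))
  · rw [hE X hX]
    exact ((hM X hX).isPositive (hq hX)).compress W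
  · rw [hE _ .univ, (hM _ .univ).eq_one, compress_one hW]
  · simp only [hE _ (hX _), hE _ (.iUnion hX), inner_compress_apply]
    refine IsIndicatorMul.hasSum_inner (fun i => hq (hX i)) (fun i j hij => (hdisj hij).preimage _)
      (fun i => hM _ (hX i)) ?_ _ _
    simpa only [Set.preimage_iUnion] using hM _ (.iUnion hX)
  · have hgX : MeasurableSet (g • X) := hX.const_smul g
    have hM_smul : IsIndicatorMul μ (g • (QuotientGroup.mk ⁻¹' X)) (Mop (g • X)) :=
      QuotientGroup.preimage_mk_smul_set Hsub g X ▸ hM _ hgX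
    rw [hE _ hgX, hE _ hX, hΛ.eq_comp_comp_of_isIndicatorMul_smul (hM X hX) g hM_smul,
      compress_comp_of_comp_commute_left hW (hWcomm g),
      compress_comp_of_comp_commute_right hW _ (hWcomm g⁻¹), hU_star, hU, hU, mul_assoc]
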